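/- There exist effects a, b, c on ℂ³ with a + b ≤ I such that a and c are not compatible (ac ≠ ca) yet a and b are additive relative to c, namely (a+b)∘c = a∘c + b∘c. Concretely, a = diag(1,0,0), b = diag(0,0,1), and c = (1/2)·[[1,1,0],[1,1,0],[0,0,0]] satisfy cb = 0, ac ≠ ca, and (a+b)∘c = a∘c + b∘c = (1/2) a. -/

import Mathlib

open Matrix
open scoped Classical ComplexOrder

/-- The positive square root of a positive semidefinite matrix
(junk value `0` on non-positive-semidefinite matrices). -/
noncomputable def sqrtM {ι : Type*} [Fintype ι] [DecidableEq ι] (a : Matrix ι ι ℂ) :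
    Matrix ι ι ℂ :=
  if h : a.PosSemidef then
    h.1.eigenvectorUnitary.1 * diagonal ((↑) ∘ Real.sqrt ∘ h.1.eigenvalues) *
      (star h.1.eigenvectorUnitary : Matrix ι ι ℂ)
  else 0

/-- The sequential product `a ∘ b = a^{1/2} b a^{1/2}` of effects. -/
noncomputable def seqProd {ι : Type*} [Fintype ι] [DecidableEq ι] (a b : Matrix ι ι ℂ) :
    Matrix ι ι ℂ :=
  sqrtM a * b * sqrtM a

/-- An effect: an operator `a` with `0 ≤ a ≤ I` in the Loewner order. -/
def IsEffect {ι : Type*} [Fintype ι] [DecidableEq ι] (a : Matrix ι ι ℂ) : Prop :=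
  a.PosSemidef ∧ (1 - a).PosSemidef

/-- The effect `a` of the counterexample: the projection `diag(1,0,0)` on `ℂ³`. -/
noncomputable def aM : Matrix (Fin 3) (Fin 3) ℂ := !![1,0,0; 0,0,0; 0,0,0]

/-- The effect `b` of the counterexample: the projection `diag(0,0,1)` on `ℂ³`. -/
noncomputable def bM : Matrix (Fin 3) (Fin 3) ℂ := !![0,0,0; 0,0,0; 0,0,1]

/-- The effect `c` of the counterexample. -/
noncomputable def cM : Matrix (Fin 3) (Fin 3) ℂ := (1/2 : ℂ) • !![1,1,0; 1,1,0; 0,0,0]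


/-! The three matrices are orthogonal projections, and the square root of a projection is the
projection itself (its eigenvalues lie in `{0, 1}`), so every sequential product reduces to
`p ∘ c = p c p`. Since `b c = c b = 0`, the cross terms of `(a + b) c (a + b)` vanish and
`b c b = 0`, leaving `a c a = (1/2) a` on both sides; meanwhile `(a c)₀₁ = 1/2 ≠ 0 = (c a)₀₁`. -/

section StarProjection

variable {ι : Type*} [Fintype ι] {p : Matrix ι ι ℂ}

theorem IsStarProjection.posSemidef (hp : IsStarProjection p) : p.PosSemidef := by
  open scoped MatrixOrder in exact hp.nonneg.posSemidef

variable [DecidableEq ι]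

theorem IsStarProjection.isEffect (hp : IsStarProjection p) : IsEffect p :=
  ⟨hp.posSemidef, hp.one_sub.posSemidef⟩

theorem IsStarProjection.sqrtM_eq (hp : IsStarProjection p) : sqrtM p = p := by
  have hpsd := hp.posSemidef
  have hsqrt : ∀ i, √(hpsd.1.eigenvalues i) = hpsd.1.eigenvalues i := fun i => by
    rcases hp.isIdempotentElem.spectrum_subset ℝ (hpsd.1.eigenvalues_mem_spectrum_real i)
      with h | h
    · rw [h, Real.sqrt_zero]
    · rw [Set.mem_singleton_iff.mp h, Real.sqrt_one]
  rw [sqrtM, dif_pos hpsd]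
  conv_rhs => rw [hpsd.1.spectral_theorem, Unitary.conjStarAlgAut_apply]
  congr 3
  funext i
  exact congrArg _ (hsqrt i)

theorem IsStarProjection.seqProd_eq (hp : IsStarProjection p) (c : Matrix ι ι ℂ) :
    seqProd p c = p * c * p := by
  rw [seqProd, hp.sqrtM_eq]

theorem IsStarProjection.seqProd_eq_zero_of_mul_eq_zero {c : Matrix ι ι ℂ}
    (hp : IsStarProjection p) (hcp : c * p = 0) : seqProd p c = 0 := by
  rw [hp.seqProd_eq, mul_assoc, hcp, mul_zero]

theorem IsStarProjection.seqProd_add_of_mul_eq_zero {q c : Matrix ι ι ℂ}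
    (hp : IsStarProjection p) (hq : IsStarProjection q) (hpq : p * q = 0)
    (hqc : q * c = 0) (hcq : c * q = 0) :
    seqProd (p + q) c = seqProd p c + seqProd q c := by
  rw [(hp.add hq hpq).seqProd_eq, hp.seqProd_eq, hq.seqProd_eq_zero_of_mul_eq_zero hcq,
    add_zero]
  simp only [add_mul, mul_add, mul_assoc, hqc, hcq, mul_zero, add_zero]

end StarProjection

theorem isStarProjection_aM : IsStarProjection aM := by
  rw [isStarProjection_iff']
  constructor <;> ext i j <;> fin_cases i <;> fin_cases j <;> simp [aM]

theorem isStarProjection_bM : IsStarProjection bM := by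
  rw [isStarProjection_iff']
  constructor <;> ext i j <;> fin_cases i <;> fin_cases j <;> simp [bM]

theorem isStarProjection_cM : IsStarProjection cM := by
  rw [isStarProjection_iff']
  constructor <;> ext i j <;> fin_cases i <;> fin_cases j <;>
    simp [cM, Matrix.mul_apply, Fin.sum_univ_three] <;> norm_num

theorem aM_mul_bM : aM * bM = 0 := by
  ext i j; fin_cases i <;> fin_cases j <;> simp [aM, bM, Matrix.mul_apply, Fin.sum_univ_three]

theorem bM_mul_cM : bM * cM = 0 := by
  ext i j; fin_cases i <;> fin_cases j <;> simp [bM, cM, Matrix.mul_apply, Fin.sum_univ_three]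

theorem cM_mul_bM : cM * bM = 0 := by
  ext i j; fin_cases i <;> fin_cases j <;> simp [bM, cM, Matrix.mul_apply, Fin.sum_univ_three]

theorem aM_mul_cM_mul_aM : aM * cM * aM = (1/2 : ℂ) • aM := by
  ext i j; fin_cases i <;> fin_cases j <;> simp [aM, cM, Matrix.mul_apply, Fin.sum_univ_three]

theorem aM_mul_cM_ne_cM_mul_aM : aM * cM ≠ cM * aM := fun h => by
  simpa [aM, cM, Matrix.mul_apply, Fin.sum_univ_three] using congr($h 0 1)

/-- The concrete effects `a`, `b`, `c` on `ℂ³` satisfy: `a ⊥ b`, `cb = 0`, `a` and `c`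
are not compatible, yet `a` and `b` are additive relative to `c`, with
`(a+b)∘c = a∘c + b∘c = (1/2)a`. -/
theorem stmt_17 :
    IsEffect aM ∧ IsEffect bM ∧ IsEffect cM ∧ (1 - (aM + bM)).PosSemidef ∧
    cM * bM = 0 ∧ aM * cM ≠ cM * aM ∧
    seqProd (aM + bM) cM = seqProd aM cM + seqProd bM cM ∧
    seqProd aM cM + seqProd bM cM = (1/2 : ℂ) • aM := by
  have ha := isStarProjection_aM
  have hb := isStarProjection_bM
  refine ⟨ha.isEffect, hb.isEffect, isStarProjection_cM.isEffect,
    (ha.add hb aM_mul_bM).one_sub.posSemidef, cM_mul_bM, aM_mul_cM_ne_cM_mul_aM,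
    ha.seqProd_add_of_mul_eq_zero hb aM_mul_bM bM_mul_cM cM_mul_bM, ?_⟩
  rw [ha.seqProd_eq, hb.seqProd_eq_zero_of_mul_eq_zero cM_mul_bM, add_zero, aM_mul_cM_mul_aM]
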